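/- The non-constancy atom NC(v) is logically equivalent to ∀w (w ≠ v ↪ All(w)): for all models M with at least two elements and all teams X with v ∈ dom(X), the variable v takes at least two distinct values in X if and only if M ⊨_X ∀w (w ≠ v ↪ All(w)), where w is a fresh variable. -/

import Mathlib

/-- A relational first-order signature. -/
structure Signature where
  RelSym : Type
  arity : RelSym → ℕ

/-- First-order formulas in negation normal form over signature `σ` and variables `V`. -/
inductive Formula (σ : Signature) (V : Type) : Type
  | rel (r : σ.RelSym) (ts : Fin (σ.arity r) → V)
  | nrel (r : σ.RelSym) (ts : Fin (σ.arity r) → V)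
  | eq (v w : V)
  | neq (v w : V)
  | and (φ ψ : Formula σ V)
  | or (φ ψ : Formula σ V)
  | ex (v : V) (φ : Formula σ V)
  | all (v : V) (φ : Formula σ V)

/-- A first-order structure with domain `M`. -/
structure Struc (σ : Signature) (M : Type) where
  interp : ∀ r : σ.RelSym, (Fin (σ.arity r) → M) → Prop

/-- Free variables of a formula. -/
def Formula.freeVars {σ : Signature} {V : Type} : Formula σ V → Set V
  | .rel _ ts => Set.range ts
  | .nrel _ ts => Set.range ts
  | .eq v w => {v, w}
  | .neq v w => {v, w}
  | .and φ ψ => φ.freeVars ∪ ψ.freeVars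
  | .or φ ψ => φ.freeVars ∪ ψ.freeVars
  | .ex v φ => φ.freeVars \ {v}
  | .all v φ => φ.freeVars \ {v}

/-- All variables (free or bound) occurring in a formula. -/
def Formula.vars {σ : Signature} {V : Type} : Formula σ V → Set V
  | .rel _ ts => Set.range ts
  | .nrel _ ts => Set.range ts
  | .eq v w => {v, w}
  | .neq v w => {v, w}
  | .and φ ψ => φ.vars ∪ ψ.vars
  | .or φ ψ => φ.vars ∪ ψ.vars
  | .ex v φ => insert v φ.vars
  | .all v φ => insert v φ.vars

/-- Tarskian satisfaction of a formula by a single assignment. -/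
def Tarski {σ : Signature} {V M : Type} [DecidableEq V] (𝕄 : Struc σ M) :
    Formula σ V → (V → M) → Prop
  | .rel r ts, s => 𝕄.interp r (fun i => s (ts i))
  | .nrel r ts, s => ¬ 𝕄.interp r (fun i => s (ts i))
  | .eq v w, s => s v = s w
  | .neq v w, s => s v ≠ s w
  | .and φ ψ, s => Tarski 𝕄 φ s ∧ Tarski 𝕄 ψ s
  | .or φ ψ, s => Tarski 𝕄 φ s ∨ Tarski 𝕄 ψ s
  | .ex v φ, s => ∃ m : M, Tarski 𝕄 φ (Function.update s v m)
  | .all v φ, s => ∀ m : M, Tarski 𝕄 φ (Function.update s v m)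

/-- Supplementation `X[H/v]` of a team. -/
def supplement {V M : Type} [DecidableEq V] (X : Set (V → M))
    (H : (V → M) → Set M) (v : V) : Set (V → M) :=
  {t | ∃ s ∈ X, ∃ m ∈ H s, t = Function.update s v m}

/-- Duplication `X[M/v]` of a team. -/
def duplicate {V M : Type} [DecidableEq V] (X : Set (V → M)) (v : V) : Set (V → M) :=
  {t | ∃ s ∈ X, ∃ m : M, t = Function.update s v m}

/-- Team Semantics satisfaction. -/
def TeamSat {σ : Signature} {V M : Type} [DecidableEq V] (𝕄 : Struc σ M) :
    Formula σ V → Set (V → M) → Prop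
  | .rel r ts, X => ∀ s ∈ X, 𝕄.interp r (fun i => s (ts i))
  | .nrel r ts, X => ∀ s ∈ X, ¬ 𝕄.interp r (fun i => s (ts i))
  | .eq v w, X => ∀ s ∈ X, s v = s w
  | .neq v w, X => ∀ s ∈ X, s v ≠ s w
  | .and φ ψ, X => TeamSat 𝕄 φ X ∧ TeamSat 𝕄 ψ X
  | .or φ ψ, X => ∃ Y Z, X = Y ∪ Z ∧ TeamSat 𝕄 φ Y ∧ TeamSat 𝕄 ψ Z
  | .ex v φ, X => ∃ H : (V → M) → Set M,
      (∀ s ∈ X, (H s).Nonempty) ∧ TeamSat 𝕄 φ (supplement X H v)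
  | .all v φ, X => TeamSat 𝕄 φ (duplicate X v)

/-- A (generalized) dependency: an arity together with, for each domain,
a property of relations of that arity (the class of relations satisfying it). -/
structure Dep where
  ar : ℕ
  sem : (M : Type) → Set (Fin ar → M) → Prop

/-- Formulas of `FO(𝒟)`: first-order formulas in NNF possibly containing
dependency atoms `D t̄`. -/
inductive TForm (σ : Signature) (V : Type) : Type 1
  | rel (r : σ.RelSym) (ts : Fin (σ.arity r) → V)
  | nrel (r : σ.RelSym) (ts : Fin (σ.arity r) → V)
  | eq (v w : V)
  | neq (v w : V)
  | and (φ ψ : TForm σ V)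
  | or (φ ψ : TForm σ V)
  | ex (v : V) (φ : TForm σ V)
  | all (v : V) (φ : TForm σ V)
  | dep (d : Dep) (ts : Fin d.ar → V)

/-- All variables occurring in a `TForm`. -/
def TForm.vars {σ : Signature} {V : Type} : TForm σ V → Set V
  | .rel _ ts => Set.range ts
  | .nrel _ ts => Set.range ts
  | .eq v w => {v, w}
  | .neq v w => {v, w}
  | .and φ ψ => φ.vars ∪ ψ.vars
  | .or φ ψ => φ.vars ∪ ψ.vars
  | .ex v φ => insert v φ.vars
  | .all v φ => insert v φ.vars
  | .dep _ ts => Set.range ts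

/-- Team Semantics for formulas with dependency atoms.  The dependency atom
`D t̄` holds in `X` iff the relation `X(t̄)` satisfies `D`. -/
def TTeamSat {σ : Signature} {V M : Type} [DecidableEq V] (𝕄 : Struc σ M) :
    TForm σ V → Set (V → M) → Prop
  | .rel r ts, X => ∀ s ∈ X, 𝕄.interp r (fun i => s (ts i))
  | .nrel r ts, X => ∀ s ∈ X, ¬ 𝕄.interp r (fun i => s (ts i))
  | .eq v w, X => ∀ s ∈ X, s v = s w
  | .neq v w, X => ∀ s ∈ X, s v ≠ s w
  | .and φ ψ, X => TTeamSat 𝕄 φ X ∧ TTeamSat 𝕄 ψ X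
  | .or φ ψ, X => ∃ Y Z, X = Y ∪ Z ∧ TTeamSat 𝕄 φ Y ∧ TTeamSat 𝕄 ψ Z
  | .ex v φ, X => ∃ H : (V → M) → Set M,
      (∀ s ∈ X, (H s).Nonempty) ∧ TTeamSat 𝕄 φ (supplement X H v)
  | .all v φ, X => TTeamSat 𝕄 φ (duplicate X v)
  | .dep d ts, X => d.sem M ((fun s => fun i => s (ts i)) '' X)

/-- The NNF negation of a first-order formula. -/
def Formula.neg {σ : Signature} {V : Type} : Formula σ V → Formula σ V
  | .rel r ts => .nrel r ts
  | .nrel r ts => .rel r ts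
  | .eq v w => .neq v w
  | .neq v w => .eq v w
  | .and φ ψ => .or φ.neg ψ.neg
  | .or φ ψ => .and φ.neg ψ.neg
  | .ex v φ => .all v φ.neg
  | .all v φ => .ex v φ.neg

/-- Embedding of first-order formulas into formulas with dependency atoms. -/
def Formula.toT {σ : Signature} {V : Type} : Formula σ V → TForm σ V
  | .rel r ts => .rel r ts
  | .nrel r ts => .nrel r ts
  | .eq v w => .eq v w
  | .neq v w => .neq v w
  | .and φ ψ => .and φ.toT ψ.toT
  | .or φ ψ => .or φ.toT ψ.toT
  | .ex v φ => .ex v φ.toT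
  | .all v φ => .all v φ.toT

/-- The connective `θ ↪ φ`, defined as `(¬θ) ∨ (θ ∧ φ)`. -/
def hook {σ : Signature} {V : Type} (θ : Formula σ V) (φ : TForm σ V) : TForm σ V :=
  .or θ.neg.toT (.and θ.toT φ)

/-- The restriction `X ↾ θ` of a team to the assignments Tarski-satisfying `θ`. -/
def restrTeam {σ : Signature} {V M : Type} [DecidableEq V] (𝕄 : Struc σ M)
    (X : Set (V → M)) (θ : Formula σ V) : Set (V → M) :=
  {s ∈ X | Tarski 𝕄 θ s}

/-- The totality dependency `All`: the relation must be the whole domain. -/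
def AllDep : Dep := ⟨1, fun M R => R = (Set.univ : Set (Fin 1 → M))⟩

/-! Any split of the duplicated team `X[M/w]` witnessing `w ≠ v ↪ All(w)` is forced, since
first-order formulas are flat; so the formula says that every `m ∈ M` is the value of `w` in
some assignment of `X[M/w]` with `w ≠ v`, i.e. that for every `m` some `s ∈ X` has `s v ≠ m`.
Over a nonempty domain this is exactly the non-constancy of `v` in `X`. -/

section TeamSemantics

variable {σ : Signature} {V M : Type} [DecidableEq V] (𝕄 : Struc σ M)

theorem Tarski_neg_iff (θ : Formula σ V) (s : V → M) :
    Tarski 𝕄 θ.neg s ↔ ¬ Tarski 𝕄 θ s := by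
  induction θ generalizing s with
  | rel | nrel | eq | neq => simp [Formula.neg, Tarski]
  | and φ ψ ihφ ihψ => simp only [Formula.neg, Tarski, ihφ, ihψ]; tauto
  | or φ ψ ihφ ihψ => simp only [Formula.neg, Tarski, ihφ, ihψ]; tauto
  | ex v φ ih => simp only [Formula.neg, Tarski, ih, not_exists]
  | all v φ ih => simp only [Formula.neg, Tarski, ih, not_forall]

theorem TTeamSat_toT_iff (θ : Formula σ V) (X : Set (V → M)) :
    TTeamSat 𝕄 θ.toT X ↔ ∀ s ∈ X, Tarski 𝕄 θ s := by
  induction θ generalizing X with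
  | rel | nrel | eq | neq => rfl
  | and φ ψ ihφ ihψ =>
    simp only [Formula.toT, TTeamSat, Tarski, ihφ, ihψ]
    exact forall₂_and.symm
  | or φ ψ ihφ ihψ =>
    simp only [Formula.toT, TTeamSat, Tarski, ihφ, ihψ]
    constructor
    · rintro ⟨Y, Z, rfl, hY, hZ⟩ s (hs | hs)
      exacts [Or.inl (hY s hs), Or.inr (hZ s hs)]
    · intro h
      refine ⟨{s ∈ X | Tarski 𝕄 φ s}, {s ∈ X | Tarski 𝕄 ψ s}, ?_, fun s hs => hs.2,
        fun s hs => hs.2⟩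
      ext s
      simp only [Set.mem_union, Set.mem_ofPred_eq]
      exact ⟨fun hs => (h s hs).imp (⟨hs, ·⟩) (⟨hs, ·⟩),
        by rintro (⟨hs, -⟩ | ⟨hs, -⟩) <;> exact hs⟩
  | ex v φ ih =>
    simp only [Formula.toT, TTeamSat, Tarski, ih, supplement]
    constructor
    · rintro ⟨H, hH, hφ⟩ s hs
      obtain ⟨m, hm⟩ := hH s hs
      exact ⟨m, hφ _ ⟨s, hs, m, hm, rfl⟩⟩
    · intro h
      refine ⟨fun s => {m | Tarski 𝕄 φ (Function.update s v m)}, h, ?_⟩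
      rintro _ ⟨s, -, m, hm, rfl⟩
      exact hm
  | all v φ ih =>
    simp only [Formula.toT, TTeamSat, Tarski, ih, duplicate]
    exact ⟨fun h s hs m => h _ ⟨s, hs, m, rfl⟩,
      by rintro h _ ⟨s, hs, m, rfl⟩; exact h s hs m⟩

theorem TTeamSat_hook_iff (θ : Formula σ V) (φ : TForm σ V) (X : Set (V → M)) :
    TTeamSat 𝕄 (hook θ φ) X ↔ TTeamSat 𝕄 φ (restrTeam 𝕄 X θ) := by
  simp only [hook, TTeamSat, TTeamSat_toT_iff, Tarski_neg_iff]
  constructor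
  · rintro ⟨Y, Z, rfl, hY, hZθ, hZφ⟩
    convert hZφ
    ext s
    exact ⟨fun ⟨hs, hθ⟩ => hs.resolve_left fun hY' => hY s hY' hθ,
      fun hs => ⟨Or.inr hs, hZθ s hs⟩⟩
  · intro h
    refine ⟨{s ∈ X | ¬ Tarski 𝕄 θ s}, restrTeam 𝕄 X θ, ?_, fun s hs => hs.2,
      fun s hs => hs.2, h⟩
    ext s
    simp only [restrTeam, Set.mem_union, Set.mem_ofPred_eq]
    tauto

theorem TTeamSat_dep_AllDep_iff (w : V) (X : Set (V → M)) :
    TTeamSat 𝕄 (.dep AllDep (fun _ => w)) X ↔ ∀ m : M, ∃ s ∈ X, s w = m := by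
  simp only [TTeamSat, AllDep, Set.eq_univ_iff_forall, Set.mem_image]
  constructor
  · intro h m
    obtain ⟨s, hs, hsm⟩ := h fun _ => m
    exact ⟨s, hs, congrFun hsm 0⟩
  · intro h f
    obtain ⟨s, hs, hsf⟩ := h (f 0)
    exact ⟨s, hs, funext fun i => by rw [Subsingleton.elim i 0, hsf]⟩

theorem exists_mem_restrTeam_duplicate_neq_iff {v w : V} (hwv : w ≠ v) (X : Set (V → M))
    (m : M) :
    (∃ t ∈ restrTeam 𝕄 (duplicate X w) (.neq w v), t w = m) ↔ ∃ s ∈ X, s v ≠ m := by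
  simp only [restrTeam, duplicate, Tarski, Set.mem_ofPred_eq]
  constructor
  · rintro ⟨_, ⟨⟨s, hs, n, rfl⟩, hne⟩, rfl⟩
    simp only [Function.update_self, Function.update_of_ne hwv.symm] at hne ⊢
    exact ⟨s, hs, Ne.symm hne⟩
  · rintro ⟨s, hs, hsm⟩
    refine ⟨Function.update s w m, ⟨⟨s, hs, m, rfl⟩, ?_⟩, Function.update_self ..⟩
    simpa [hwv.symm] using hsm.symm

end TeamSemantics

theorem Set.exists_ne_iff_forall_exists_ne {α β : Type*} [Nonempty β] (f : α → β)
    (X : Set α) :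
    (∃ x ∈ X, ∃ y ∈ X, f x ≠ f y) ↔ ∀ b : β, ∃ x ∈ X, f x ≠ b := by
  constructor
  · rintro ⟨x, hx, y, hy, hxy⟩ b
    by_cases hxb : f x = b
    · exact ⟨y, hy, hxb ▸ hxy.symm⟩
    · exact ⟨x, hx, hxb⟩
  · intro h
    obtain ⟨x, hx, -⟩ := h (Classical.arbitrary β)
    obtain ⟨y, hy, hyx⟩ := h (f x)
    exact ⟨x, hx, y, hy, Ne.symm hyx⟩

/-- `NC(v) ≡ ∀w (w ≠ v ↪ All(w))` over models with at least
two elements, for a fresh variable `w`. -/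
theorem nonconstancy_via_totality {σ : Signature} {V M : Type} [DecidableEq V]
    (𝕄 : Struc σ M) (h2 : ∃ a b : M, a ≠ b) (v w : V) (hwv : w ≠ v)
    (X : Set (V → M)) :
    (∃ s ∈ X, ∃ s' ∈ X, s v ≠ s' v) ↔
      TTeamSat 𝕄 (.all w (hook (.neq w v) (.dep AllDep (fun _ => w)))) X := by
  obtain ⟨a, -⟩ := h2
  have : Nonempty M := ⟨a⟩
  show _ ↔ TTeamSat 𝕄 (hook (.neq w v) (.dep AllDep (fun _ => w))) (duplicate X w)
  rw [TTeamSat_hook_iff, TTeamSat_dep_AllDep_iff, Set.exists_ne_iff_forall_exists_ne]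
  exact forall_congr' fun m => (exists_mem_restrTeam_duplicate_neq_iff 𝕄 hwv X m).symm
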